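/- Let u be a C^2 solution of the minimal surface equation g^{αβ}(∂u) ∂_α ∂_β u = 0 with 1 + m^{μν} ∂_μ u ∂_ν u > 0, and define the covariant d'Alembertian Box_g v := g^{-1/2} ∂_α ( g^{1/2} g^{αβ} ∂_β v ) where g = 1 + m^{μν} ∂_μ u ∂_ν u. Then for every C^2 function v one has Box_g v = g^{αβ} ∂_α ∂_β v; i.e. the first-order terms in the covariant d'Alembertian cancel identically along solutions u. -/

import Mathlib

noncomputable section

open scoped BigOperators

/-- The Minkowski metric `diag(-1,1,...,1)` on `ℝ^{n+1}` (it is its own inverse). -/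
def mink (n : ℕ) (α β : Fin (n + 1)) : ℝ :=
  if α = β then (if α = 0 then -1 else 1) else 0

/-- `m^{μν} p_μ p_ν` for a fixed vector `p` (the gradient `∂u` at a point). -/
def mSq (n : ℕ) (p : Fin (n + 1) → ℝ) : ℝ :=
  ∑ μ, ∑ ν, mink n μ ν * p μ * p ν

/-- The induced metric `g_{αβ} = m_{αβ} + p_α p_β`. -/
def gLow (n : ℕ) (p : Fin (n + 1) → ℝ) (α β : Fin (n + 1)) : ℝ :=
  mink n α β + p α * p β

/-- The dual metric `G^{αβ} = m^{αβ} - (m^{αγ} m^{βδ} p_γ p_δ)/(1 + m^{μν} p_μ p_ν)`. -/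
def gUp (n : ℕ) (p : Fin (n + 1) → ℝ) (α β : Fin (n + 1)) : ℝ :=
  mink n α β - (∑ γ, mink n α γ * p γ) * (∑ δ, mink n β δ * p δ) / (1 + mSq n p)

/-- The partial derivative `∂_α f` at `x`. -/
def pd (n : ℕ) (f : (Fin (n + 1) → ℝ) → ℝ) (α : Fin (n + 1)) (x : Fin (n + 1) → ℝ) : ℝ :=
  fderiv ℝ f x (Pi.single α 1)

/-- `g = 1 + m^{μν} ∂_μ u ∂_ν u` as a function of the point. -/
def gDet (n : ℕ) (u : (Fin (n + 1) → ℝ) → ℝ) (x : Fin (n + 1) → ℝ) : ℝ :=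
  1 + mSq n (fun δ => pd n u δ x)

/-! Write `√g G^{αβ} = m^{αβ} √g - Q^α Q^β / √g` with `Q^α = m^{αδ} ∂_δ u`. Differentiating,
`√g ∂_α (√g G^{αβ})` is a sum in which the terms `m^{αβ} Q^ν ∂_α ∂_ν u` and
`Q^α m^{βδ} ∂_α ∂_δ u` cancel by the symmetry of the Hessian of `u`, and what is left is
`-Q^β G^{αγ} ∂_α ∂_γ u`, which vanishes by the minimal surface equation. So `√g G^{αβ}` is
divergence free, and the product rule leaves only `√g G^{αβ} ∂_α ∂_β v` in `Box_g v`. -/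

open Finset

section Algebra

variable {ι : Type*} [Fintype ι] {m H : ι → ι → ℝ}

theorem sum_mul_sum_mul_comm (hm : ∀ a b, m a b = m b a) (hH : ∀ a b, H a b = H b a)
    (Q : ι → ℝ) (b : ι) :
    ∑ a, m a b * ∑ ν, Q ν * H a ν = ∑ a, Q a * ∑ δ, m b δ * H a δ := by
  simp only [mul_sum]
  rw [sum_comm]
  refine sum_congr rfl fun a _ => sum_congr rfl fun ν _ => ?_
  rw [hm ν b, hH ν a]
  ring

-- The summand is `√g · ∂_a (√g G^{ab})` written through `Q^a = m^{aδ} ∂_δ u`, the Hessian `H`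
-- and `∂_a g = 2 Q^ν H_{aν}`.
theorem sum_divergence_bracket_eq (hm : ∀ a b, m a b = m b a) (hH : ∀ a b, H a b = H b a)
    (Q : ι → ℝ) (g : ℝ) (b : ι) :
    ∑ a, (m a b * (∑ ν, Q ν * H a ν) - (∑ δ, m a δ * H a δ) * Q b
        - Q a * (∑ δ, m b δ * H a δ) + Q a * Q b * (∑ ν, Q ν * H a ν) / g)
      = -Q b * ∑ a, ∑ c, (m a c - Q a * Q c / g) * H a c := by
  have hcancel := sum_mul_sum_mul_comm hm hH Q b
  simp only [sum_add_distrib, sum_sub_distrib, mul_sum, sum_mul, sub_mul] at hcancel ⊢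
  rw [hcancel]
  simp only [mul_sub, mul_sum, sum_div, neg_mul, ← sum_sub_distrib, ← sum_add_distrib]
  refine sum_congr rfl fun a _ => sum_congr rfl fun c _ => ?_
  ring

end Algebra

section PartialDerivatives

variable {n : ℕ} {f g : (Fin (n + 1) → ℝ) → ℝ} {x : Fin (n + 1) → ℝ} {α : Fin (n + 1)}

theorem pd_sum {ι : Type*} (t : Finset ι) {F : ι → (Fin (n + 1) → ℝ) → ℝ}
    (hF : ∀ i ∈ t, DifferentiableAt ℝ (F i) x) :
    pd n (fun y => ∑ i ∈ t, F i y) α x = ∑ i ∈ t, pd n (F i) α x := by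
  simp [pd, fderiv_fun_sum hF]

theorem pd_mul (hf : DifferentiableAt ℝ f x) (hg : DifferentiableAt ℝ g x) :
    pd n (fun y => f y * g y) α x = pd n f α x * g x + f x * pd n g α x := by
  simp [pd, fderiv_fun_mul hf hg]
  ring

theorem pd_const_mul (c : ℝ) (hf : DifferentiableAt ℝ f x) :
    pd n (fun y => c * f y) α x = c * pd n f α x := by
  simp [pd, fderiv_const_mul hf]

theorem pd_sub (hf : DifferentiableAt ℝ f x) (hg : DifferentiableAt ℝ g x) :
    pd n (fun y => f y - g y) α x = pd n f α x - pd n g α x := by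
  simp [pd, fderiv_fun_sub hf hg]

theorem pd_const_add (c : ℝ) : pd n (fun y => c + f y) α x = pd n f α x := by
  simp [pd]

theorem pd_sqrt (hf : DifferentiableAt ℝ f x) (hx : f x ≠ 0) :
    pd n (fun y => √(f y)) α x = pd n f α x / (2 * √(f x)) := by
  simp [pd, fderiv_sqrt hf hx]
  ring

theorem pd_inv (hf : DifferentiableAt ℝ f x) (hx : f x ≠ 0) :
    pd n (fun y => (f y)⁻¹) α x = -pd n f α x / f x ^ 2 := by
  have h : HasFDerivAt (fun y => (f y)⁻¹) (-(f x ^ 2)⁻¹ • fderiv ℝ f x) x :=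
    (hasDerivAt_inv hx).comp_hasFDerivAt x hf.hasFDerivAt
  simp [pd, h.fderiv]
  ring

theorem pd_sum_const_mul (c : Fin (n + 1) → ℝ) {f : Fin (n + 1) → (Fin (n + 1) → ℝ) → ℝ}
    (hf : ∀ δ, DifferentiableAt ℝ (f δ) x) :
    pd n (fun y => ∑ δ, c δ * f δ y) α x = ∑ δ, c δ * pd n (f δ) α x := by
  rw [pd_sum _ fun δ _ => (hf δ).const_mul (c δ)]
  exact sum_congr rfl fun δ _ => pd_const_mul (c δ) (hf δ)

theorem pd_sum_sum_mul_mul {m : Fin (n + 1) → Fin (n + 1) → ℝ} (hm : ∀ a b, m a b = m b a)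
    {f : Fin (n + 1) → (Fin (n + 1) → ℝ) → ℝ} (hf : ∀ δ, DifferentiableAt ℝ (f δ) x) :
    pd n (fun y => ∑ μ, ∑ ν, m μ ν * f μ y * f ν y) α x
      = 2 * ∑ ν, (∑ δ, m ν δ * f δ x) * pd n (f ν) α x := by
  have hterm : ∀ μ ν, DifferentiableAt ℝ (fun y => m μ ν * f μ y * f ν y) x :=
    fun μ ν => ((hf μ).const_mul _).mul (hf ν)
  rw [pd_sum _ fun μ _ => DifferentiableAt.fun_sum fun ν _ => hterm μ ν]
  simp only [pd_sum _ fun ν _ => hterm _ ν, pd_mul ((hf _).const_mul _) (hf _),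
    pd_const_mul _ (hf _), sum_add_distrib, mul_sum, sum_mul, two_mul]
  congr 1
  · exact sum_congr rfl fun μ _ => sum_congr rfl fun ν _ => by ring
  · rw [sum_comm]
    exact sum_congr rfl fun μ _ => sum_congr rfl fun ν _ => by rw [hm]

theorem pd_const_mul_sqrt_sub_mul_mul_inv_sqrt (c : ℝ) {g q r : (Fin (n + 1) → ℝ) → ℝ}
    (hg : DifferentiableAt ℝ g x) (hgx : 0 < g x)
    (hq : DifferentiableAt ℝ q x) (hr : DifferentiableAt ℝ r x) :
    pd n (fun y => c * √(g y) - q y * r y * (√(g y))⁻¹) α x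
      = (√(g x))⁻¹ * (c * (pd n g α x / 2) - pd n q α x * r x - q x * pd n r α x
          + q x * r x * (pd n g α x / 2) / g x) := by
  have hsqrt : DifferentiableAt ℝ (fun y => √(g y)) x := hg.sqrt hgx.ne'
  have hroot : √(g x) ≠ 0 := (Real.sqrt_pos.mpr hgx).ne'
  have hqr : DifferentiableAt ℝ (fun y => q y * r y) x := hq.fun_mul hr
  have hinv : DifferentiableAt ℝ (fun y => (√(g y))⁻¹) x := hsqrt.fun_inv hroot
  rw [pd_sub (hsqrt.const_mul c) (hqr.fun_mul hinv), pd_const_mul c hsqrt, pd_mul hqr hinv,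
    pd_mul hq hr, pd_inv hsqrt hroot, pd_sqrt hg hgx.ne']
  have hsq : √(g x) ^ 2 = g x := Real.sq_sqrt hgx.le
  field_simp
  rw [hsq]
  ring

theorem sum_pd_sum_mul {W : Fin (n + 1) → Fin (n + 1) → (Fin (n + 1) → ℝ) → ℝ}
    {w : Fin (n + 1) → (Fin (n + 1) → ℝ) → ℝ}
    (hW : ∀ α β, DifferentiableAt ℝ (W α β) x) (hw : ∀ β, DifferentiableAt ℝ (w β) x) :
    ∑ α, pd n (fun y => ∑ β, W α β y * w β y) α x
      = ∑ β, (∑ α, pd n (W α β) α x) * w β x + ∑ α, ∑ β, W α β x * pd n (w β) α x := by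
  simp only [pd_sum _ fun β _ => (hW _ β).fun_mul (hw β), pd_mul (hW _ _) (hw _),
    sum_add_distrib, sum_mul]
  rw [sum_comm]

end PartialDerivatives

section SecondDerivatives

variable {n : ℕ} {u : (Fin (n + 1) → ℝ) → ℝ} {x : Fin (n + 1) → ℝ}

theorem ContDiffAt.differentiableAt_pd (hu : ContDiffAt ℝ 2 u x) (δ : Fin (n + 1)) :
    DifferentiableAt ℝ (pd n u δ) x :=
  ((hu.fderiv_right le_rfl).clm_apply contDiffAt_const).differentiableAt one_ne_zero

theorem pd_pd_eq_fderiv_fderiv (hu : DifferentiableAt ℝ (fderiv ℝ u) x) (a b : Fin (n + 1)) :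
    pd n (pd n u b) a x = fderiv ℝ (fderiv ℝ u) x (Pi.single a 1) (Pi.single b 1) := by
  change fderiv ℝ (fun y => fderiv ℝ u y (Pi.single b 1)) x (Pi.single a 1) = _
  simp [fderiv_clm_apply hu (differentiableAt_const _)]

theorem ContDiffAt.pd_pd_comm (hu : ContDiffAt ℝ 2 u x) (a b : Fin (n + 1)) :
    pd n (pd n u b) a x = pd n (pd n u a) b x := by
  have hu' : DifferentiableAt ℝ (fderiv ℝ u) x :=
    (hu.fderiv_right le_rfl).differentiableAt one_ne_zero
  rw [pd_pd_eq_fderiv_fderiv hu', pd_pd_eq_fderiv_fderiv hu']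
  exact hu.isSymmSndFDerivAt (by simp) _ _

end SecondDerivatives

section MinimalSurface

theorem mink_symm (n : ℕ) (α β : Fin (n + 1)) : mink n α β = mink n β α := by
  by_cases h : α = β
  · rw [h]
  · simp [mink, h, Ne.symm h]

-- `√g / g = (√g)⁻¹` holds for every real `g`, so no positivity is needed.
theorem sqrt_mul_gUp (n : ℕ) (p : Fin (n + 1) → ℝ) (α β : Fin (n + 1)) :
    √(1 + mSq n p) * gUp n p α β
      = mink n α β * √(1 + mSq n p)
        - (∑ γ, mink n α γ * p γ) * (∑ δ, mink n β δ * p δ) * (√(1 + mSq n p))⁻¹ := by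
  rw [gUp, ← Real.sqrt_div_self]
  ring

theorem sqrt_gDet_mul_gUp (n : ℕ) (u : (Fin (n + 1) → ℝ) → ℝ) (α β : Fin (n + 1)) :
    (fun y => √(gDet n u y) * gUp n (fun δ => pd n u δ y) α β)
      = fun y => mink n α β * √(gDet n u y) - (∑ γ, mink n α γ * pd n u γ y)
          * (∑ δ, mink n β δ * pd n u δ y) * (√(gDet n u y))⁻¹ :=
  funext fun _ => sqrt_mul_gUp n _ α β

variable {n : ℕ} {u : (Fin (n + 1) → ℝ) → ℝ} {x : Fin (n + 1) → ℝ}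

theorem differentiableAt_gDet (hu : ∀ δ, DifferentiableAt ℝ (pd n u δ) x) :
    DifferentiableAt ℝ (gDet n u) x := by
  unfold gDet mSq
  fun_prop

theorem pd_gDet (hu : ∀ δ, DifferentiableAt ℝ (pd n u δ) x) (α : Fin (n + 1)) :
    pd n (gDet n u) α x = 2 * ∑ ν, (∑ δ, mink n ν δ * pd n u δ x) * pd n (pd n u ν) α x := by
  change pd n (fun y => 1 + ∑ μ, ∑ ν, mink n μ ν * pd n u μ y * pd n u ν y) α x = _
  rw [pd_const_add, pd_sum_sum_mul_mul (mink_symm n) hu]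

theorem differentiableAt_sqrt_gDet_mul_gUp (hu : ∀ δ, DifferentiableAt ℝ (pd n u δ) x)
    (hg : 0 < gDet n u x) (α β : Fin (n + 1)) :
    DifferentiableAt ℝ (fun y => √(gDet n u y) * gUp n (fun δ => pd n u δ y) α β) x := by
  have hsqrt : DifferentiableAt ℝ (fun y => √(gDet n u y)) x :=
    (differentiableAt_gDet hu).sqrt hg.ne'
  rw [sqrt_gDet_mul_gUp]
  have hroot : √(gDet n u x) ≠ 0 := (Real.sqrt_pos.mpr hg).ne'
  fun_prop (disch := exact hroot)

theorem sum_pd_sqrt_gDet_mul_gUp (hu : ContDiffAt ℝ 2 u x) (hg : 0 < gDet n u x)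
    (hmin : ∑ α, ∑ β, gUp n (fun δ => pd n u δ x) α β * pd n (pd n u β) α x = 0)
    (β : Fin (n + 1)) :
    ∑ α, pd n (fun y => √(gDet n u y) * gUp n (fun δ => pd n u δ y) α β) α x = 0 := by
  have hdu := hu.differentiableAt_pd
  have hQdiff : ∀ γ, DifferentiableAt ℝ (fun y => ∑ δ, mink n γ δ * pd n u δ y) x := by
    fun_prop
  simp only [sqrt_gDet_mul_gUp,
    pd_const_mul_sqrt_sub_mul_mul_inv_sqrt _ (differentiableAt_gDet hdu) hg (hQdiff _) (hQdiff _),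
    pd_gDet hdu, pd_sum_const_mul _ hdu, ← mul_sum]
  set Q : Fin (n + 1) → ℝ := fun γ => ∑ δ, mink n γ δ * pd n u δ x
  have hmin' : ∑ α, ∑ γ, (mink n α γ - Q α * Q γ / gDet n u x) * pd n (pd n u γ) α x = 0 :=
    hmin
  have hbracket := sum_divergence_bracket_eq (H := fun α ν => pd n (pd n u ν) α x) (mink_symm n)
    hu.pd_pd_comm Q (gDet n u x) β
  calc
    _ = (√(gDet n u x))⁻¹ * (-Q β * ∑ α, ∑ γ, (mink n α γ - Q α * Q γ / gDet n u x)
          * pd n (pd n u γ) α x) := by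
      rw [← hbracket]
      exact congrArg _ (sum_congr rfl fun α _ => by ring)
    _ = 0 := by rw [hmin', mul_zero, mul_zero]

end MinimalSurface

/-- for a `C^2` solution `u` of the minimal surface equation with
`1 + m^{μν} ∂_μ u ∂_ν u > 0`, the covariant d'Alembertian
`Box_g v = g^{-1/2} ∂_α ( g^{1/2} g^{αβ} ∂_β v )` satisfies
`Box_g v = g^{αβ} ∂_α ∂_β v` for every `C^2` function `v`: the first-order terms
cancel identically along solutions `u`. -/
theorem covariant_dalembertian (n : ℕ) (u v : (Fin (n + 1) → ℝ) → ℝ)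
    (s : Set (Fin (n + 1) → ℝ)) (hs : IsOpen s)
    (hu : ContDiffOn ℝ 2 u s) (hv : ContDiffOn ℝ 2 v s)
    (hcon : ∀ x ∈ s, 0 < gDet n u x)
    (heq : ∀ x ∈ s, ∑ α, ∑ β, gUp n (fun δ => pd n u δ x) α β *
      pd n (fun y => pd n u β y) α x = 0) :
    ∀ x ∈ s,
      (Real.sqrt (gDet n u x))⁻¹ *
          (∑ α, pd n (fun y => ∑ β, Real.sqrt (gDet n u y) *
              gUp n (fun δ => pd n u δ y) α β * pd n v β y) α x)
        = ∑ α, ∑ β, gUp n (fun δ => pd n u δ x) α β *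
            pd n (fun y => pd n v β y) α x := by
  intro x hx
  have hux : ContDiffAt ℝ 2 u x := hu.contDiffAt (hs.mem_nhds hx)
  have hvx : ContDiffAt ℝ 2 v x := hv.contDiffAt (hs.mem_nhds hx)
  have hg : 0 < gDet n u x := hcon x hx
  rw [sum_pd_sum_mul (differentiableAt_sqrt_gDet_mul_gUp hux.differentiableAt_pd hg)
    hvx.differentiableAt_pd]
  simp only [sum_pd_sqrt_gDet_mul_gUp hux hg (heq x hx), zero_mul, sum_const_zero, zero_add,
    mul_sum, mul_assoc]
  exact sum_congr rfl fun α _ => sum_congr rfl fun β _ =>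
    inv_mul_cancel_left₀ (Real.sqrt_pos.mpr hg).ne' _
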